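/- (Sampled matrix multiplication.) Let A ∈ ℝ^{d×m} and B ∈ ℝ^{n×m} with A ≠ 0, and let a sampling budget k ≥ 1 be given. Then there exists a choice of indices i_1,...,i_k ∈ {1,...,m} (with a_{i_j} := A e_{i_j} ≠ 0) such that, setting M := (‖A‖_F²/k) Σ_{j=1}^k e_{i_j} e_{i_j}^T / ‖A e_{i_j}‖², one has ‖A B^T − A M B^T‖_F² ≤ (1/k) ‖A‖_F² ‖B‖_F². -/

import Mathlib

/-!
Sample column `i` with probability `βᵢ = ‖A eᵢ‖² / ‖A‖_F²` and let `Vᵢ = βᵢ⁻¹ (A eᵢ)(B eᵢ)ᵀ`.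
Then `∑ βᵢ Vᵢ = A Bᵀ`, `∑ βᵢ ‖Vᵢ‖_F² ≤ ‖A‖_F² ‖B‖_F²`, and `A M Bᵀ` is the average of the sampled
`Vᵢⱼ`. Viewing matrices as vectors of a Euclidean space, Maurey's lemma yields `k` indices of
positive weight whose average is within `(∑ βᵢ ‖Vᵢ‖²) / k` of the mean in squared norm.
Maurey's lemma is proved greedily rather than by averaging over all `k`-tuples: for a sum `S` of
centred samples `wᵢ = Vᵢ - A Bᵀ`, the `β`-mean of `‖S + wᵢ‖²` is `‖S‖² + ∑ βᵢ ‖wᵢ‖²`, so some index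
of positive weight increases `‖S‖²` by at most the variance.
-/

open Matrix
noncomputable def frob {α β : Type*} [Fintype α] [Fintype β] (A : Matrix α β ℝ) : ℝ :=
  Real.sqrt (∑ i, ∑ j, (A i j) ^ 2)

noncomputable def colNorm {α β : Type*} [Fintype α] (A : Matrix α β ℝ) (j : β) : ℝ :=
  Real.sqrt (∑ i, (A i j) ^ 2)

open Finset

section Maurey

variable {ι E : Type*} [Fintype ι] [NormedAddCommGroup E] [InnerProductSpace ℝ E]

lemma exists_ne_zero_and_le_sum_mul {β : ι → ℝ} (hβ₀ : ∀ i, 0 ≤ β i) (hβ₁ : ∑ i, β i = 1)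
    (f : ι → ℝ) : ∃ i, β i ≠ 0 ∧ f i ≤ ∑ j, β j * f j := by
  by_contra! h
  obtain ⟨i₀, -, hi₀⟩ := exists_ne_zero_of_sum_ne_zero (hβ₁.trans_ne one_ne_zero)
  have hlt : ∑ j, β j * ∑ i, β i * f i < ∑ j, β j * f j := by
    refine sum_lt_sum (fun j _ => ?_) ⟨i₀, mem_univ _, ?_⟩
    · rcases (hβ₀ j).eq_or_lt with hj | hj
      · simp [← hj]
      · exact mul_le_mul_of_nonneg_left (h j hj.ne').le hj.le
    · exact mul_lt_mul_of_pos_left (h i₀ hi₀) ((hβ₀ i₀).lt_of_ne' hi₀)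
  rw [← sum_mul, hβ₁, one_mul] at hlt
  exact hlt.false

lemma sum_mul_norm_add_sq_of_sum_smul_eq_zero {β : ι → ℝ} (hβ₁ : ∑ i, β i = 1) {w : ι → E}
    (hw : ∑ i, β i • w i = 0) (x : E) :
    ∑ i, β i * ‖x + w i‖ ^ 2 = ‖x‖ ^ 2 + ∑ i, β i * ‖w i‖ ^ 2 := by
  have hcross : ∑ i, β i * inner ℝ x (w i) = 0 := by
    simp_rw [← inner_smul_right, ← inner_sum, hw, inner_zero_right]
  simp_rw [norm_add_sq_real, mul_add, sum_add_distrib, ← sum_mul, hβ₁, mul_left_comm _ (2 : ℝ),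
    ← mul_sum, hcross]
  ring

lemma exists_norm_sum_sq_le {β : ι → ℝ} (hβ₀ : ∀ i, 0 ≤ β i) (hβ₁ : ∑ i, β i = 1) {w : ι → E}
    (hw : ∑ i, β i • w i = 0) (k : ℕ) :
    ∃ σ : Fin k → ι, (∀ j, β (σ j) ≠ 0) ∧ ‖∑ j, w (σ j)‖ ^ 2 ≤ k * ∑ i, β i * ‖w i‖ ^ 2 := by
  induction k with
  | zero => exact ⟨Fin.elim0, fun j => j.elim0, by simp⟩
  | succ k ih =>
    obtain ⟨σ, hσ, hle⟩ := ih
    obtain ⟨i, hi, hile⟩ :=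
      exists_ne_zero_and_le_sum_mul hβ₀ hβ₁ fun i => ‖∑ j, w (σ j) + w i‖ ^ 2
    rw [sum_mul_norm_add_sq_of_sum_smul_eq_zero hβ₁ hw] at hile
    refine ⟨Fin.cons i σ, Fin.cases hi hσ, ?_⟩
    simp only [Fin.sum_univ_succ, Fin.cons_zero, Fin.cons_succ, add_comm (w i)]
    push_cast
    linarith

theorem exists_norm_sum_smul_sub_average_sq_le {β : ι → ℝ} (hβ₀ : ∀ i, 0 ≤ β i)
    (hβ₁ : ∑ i, β i = 1) (v : ι → E) {k : ℕ} (hk : k ≠ 0) :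
    ∃ σ : Fin k → ι, (∀ j, β (σ j) ≠ 0) ∧
      ‖∑ i, β i • v i - (k : ℝ)⁻¹ • ∑ j, v (σ j)‖ ^ 2 ≤ (k : ℝ)⁻¹ * ∑ i, β i * ‖v i‖ ^ 2 := by
  set μ := ∑ i, β i • v i
  have hcentred : ∑ i, β i • (v i - μ) = 0 := by
    rw [sum_congr rfl fun i _ => smul_sub (β i) (v i) μ, sum_sub_distrib, ← sum_smul, hβ₁,
      one_smul, sub_self]
  obtain ⟨σ, hσ, hle⟩ := exists_norm_sum_sq_le hβ₀ hβ₁ hcentred k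
  refine ⟨σ, hσ, ?_⟩
  have hk' : (k : ℝ) ≠ 0 := Nat.cast_ne_zero.mpr hk
  have hdev : μ - (k : ℝ)⁻¹ • ∑ j, v (σ j) = -(k : ℝ)⁻¹ • ∑ j, (v (σ j) - μ) := by
    rw [sum_sub_distrib, sum_const, card_univ, Fintype.card_fin, smul_sub,
      ← Nat.cast_smul_eq_nsmul ℝ, smul_smul, neg_mul, inv_mul_cancel₀ hk']
    module
  have hsecond := sum_mul_norm_add_sq_of_sum_smul_eq_zero hβ₁ hcentred μ
  simp only [add_sub_cancel] at hsecond
  rw [hdev, norm_smul, mul_pow, norm_neg, norm_inv, Real.norm_natCast]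
  calc ((k : ℝ)⁻¹) ^ 2 * ‖∑ j, (v (σ j) - μ)‖ ^ 2
      ≤ ((k : ℝ)⁻¹) ^ 2 * (k * ∑ i, β i * ‖v i - μ‖ ^ 2) := by gcongr
    _ = (k : ℝ)⁻¹ * ∑ i, β i * ‖v i - μ‖ ^ 2 := by field_simp
    _ ≤ (k : ℝ)⁻¹ * ∑ i, β i * ‖v i‖ ^ 2 := by
      refine mul_le_mul_of_nonneg_left ?_ (by positivity)
      rw [hsecond]
      exact le_add_of_nonneg_left (sq_nonneg _)

end Maurey

namespace Matrix

variable {α β : Type*}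

def toEuclideanSpace : Matrix α β ℝ →ₗ[ℝ] EuclideanSpace ℝ (α × β) where
  toFun M := WithLp.toLp 2 fun p => M p.1 p.2
  map_add' _ _ := rfl
  map_smul' _ _ := rfl

lemma toEuclideanSpace_apply (M : Matrix α β ℝ) (p : α × β) :
    M.toEuclideanSpace p = M p.1 p.2 :=
  rfl

lemma toEuclideanSpace_injective :
    Function.Injective (toEuclideanSpace : Matrix α β ℝ →ₗ[ℝ] _) :=
  fun _ _ h => ext fun p q => congrArg (fun x : EuclideanSpace ℝ (α × β) => x (p, q)) h

end Matrix

section Frobenius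

variable {α β γ : Type*}

lemma frob_eq_norm_toEuclideanSpace [Fintype α] [Fintype β] (M : Matrix α β ℝ) :
    frob M = ‖M.toEuclideanSpace‖ := by
  simp [frob, EuclideanSpace.norm_eq, toEuclideanSpace_apply, Fintype.sum_prod_type]

lemma frob_eq_zero_iff [Fintype α] [Fintype β] {M : Matrix α β ℝ} : frob M = 0 ↔ M = 0 := by
  rw [frob_eq_norm_toEuclideanSpace, norm_eq_zero, map_eq_zero_iff _ toEuclideanSpace_injective]

lemma frob_smul [Fintype α] [Fintype β] (c : ℝ) (M : Matrix α β ℝ) :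
    frob (c • M) = |c| * frob M := by
  rw [frob_eq_norm_toEuclideanSpace, frob_eq_norm_toEuclideanSpace, map_smul, norm_smul,
    Real.norm_eq_abs]

lemma colNorm_eq_norm [Fintype α] (A : Matrix α γ ℝ) (j : γ) :
    colNorm A j = ‖(WithLp.toLp 2 fun i => A i j : EuclideanSpace ℝ α)‖ := by
  simp [colNorm, EuclideanSpace.norm_eq]

lemma frob_sq_eq_sum_colNorm_sq [Fintype α] [Fintype γ] (A : Matrix α γ ℝ) :
    frob A ^ 2 = ∑ j, colNorm A j ^ 2 := by
  rw [frob, Real.sq_sqrt (by positivity), sum_comm]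
  simp only [colNorm, Real.sq_sqrt (sum_nonneg fun _ _ => sq_nonneg _)]

variable [Fintype γ] [DecidableEq γ]

lemma mul_single_mul_transpose_apply (A : Matrix α γ ℝ) (B : Matrix β γ ℝ) (i : γ) (p : α)
    (q : β) : (A * single i i (1 : ℝ) * Bᵀ) p q = A p i * B q i := by
  simp [Matrix.mul_apply, Matrix.single_apply, ite_and]

lemma mul_transpose_eq_sum_mul_single_mul_transpose (A : Matrix α γ ℝ) (B : Matrix β γ ℝ) :
    A * Bᵀ = ∑ i : γ, A * single i i (1 : ℝ) * Bᵀ := by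
  ext p q
  simp only [Matrix.sum_apply, mul_single_mul_transpose_apply]
  exact Matrix.mul_apply

lemma frob_mul_single_mul_transpose [Fintype α] [Fintype β] (A : Matrix α γ ℝ)
    (B : Matrix β γ ℝ) (i : γ) :
    frob (A * single i i (1 : ℝ) * Bᵀ) = colNorm A i * colNorm B i := by
  simp only [frob, colNorm, mul_single_mul_transpose_apply, mul_pow, ← sum_mul_sum]
  exact Real.sqrt_mul (sum_nonneg fun _ _ => sq_nonneg _) _

end Frobenius

section ImportanceSampling

variable {α β γ : Type*} [Fintype α] [Fintype γ]

noncomputable def importanceWeight (A : Matrix α γ ℝ) (i : γ) : ℝ :=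
  colNorm A i ^ 2 / frob A ^ 2

noncomputable def importanceSample [DecidableEq γ] (A : Matrix α γ ℝ) (B : Matrix β γ ℝ)
    (i : γ) : Matrix α β ℝ :=
  (importanceWeight A i)⁻¹ • (A * single i i (1 : ℝ) * Bᵀ)

lemma importanceWeight_nonneg (A : Matrix α γ ℝ) (i : γ) : 0 ≤ importanceWeight A i := by
  unfold importanceWeight
  positivity

lemma sum_importanceWeight {A : Matrix α γ ℝ} (hA : A ≠ 0) : ∑ i, importanceWeight A i = 1 := by
  simp only [importanceWeight]
  rw [← sum_div, ← frob_sq_eq_sum_colNorm_sq,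
    div_self (pow_ne_zero 2 (frob_eq_zero_iff.not.mpr hA))]

lemma importanceWeight_eq_zero_iff {A : Matrix α γ ℝ} (hA : A ≠ 0) (i : γ) :
    importanceWeight A i = 0 ↔ colNorm A i = 0 := by
  simp [importanceWeight, frob_eq_zero_iff, hA]

variable [DecidableEq γ]

lemma mul_smul_sum_smul_single_mul_transpose {k : ℕ} (A : Matrix α γ ℝ) (B : Matrix β γ ℝ)
    (σ : Fin k → γ) :
    A * ((frob A ^ 2 / k) • ∑ j, (1 / colNorm A (σ j) ^ 2) • single (σ j) (σ j) (1 : ℝ)) * Bᵀ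
      = (k : ℝ)⁻¹ • ∑ j, importanceSample A B (σ j) := by
  simp only [Matrix.mul_smul, Matrix.smul_mul, Matrix.mul_sum, Matrix.sum_mul, smul_sum,
    importanceSample, importanceWeight, smul_smul, inv_div]
  congr 1; ext1 j; congr 1; ring

variable [Fintype β]

lemma importanceWeight_smul_importanceSample {A : Matrix α γ ℝ} (hA : A ≠ 0) (B : Matrix β γ ℝ)
    (i : γ) : importanceWeight A i • importanceSample A B i = A * single i i (1 : ℝ) * Bᵀ := by
  rw [importanceSample, smul_smul]
  rcases eq_or_ne (importanceWeight A i) 0 with hw | hw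
  · have hcol := (importanceWeight_eq_zero_iff hA i).mp hw
    have hzero : A * single i i (1 : ℝ) * Bᵀ = 0 := by
      rw [← frob_eq_zero_iff, frob_mul_single_mul_transpose, hcol, zero_mul]
    rw [hzero, smul_zero]
  · rw [mul_inv_cancel₀ hw, one_smul]

lemma sum_importanceWeight_smul_importanceSample {A : Matrix α γ ℝ} (hA : A ≠ 0)
    (B : Matrix β γ ℝ) : ∑ i, importanceWeight A i • importanceSample A B i = A * Bᵀ := by
  rw [mul_transpose_eq_sum_mul_single_mul_transpose]
  exact sum_congr rfl fun i _ => importanceWeight_smul_importanceSample hA B i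

lemma importanceWeight_mul_frob_importanceSample_sq_le (A : Matrix α γ ℝ) (B : Matrix β γ ℝ)
    (i : γ) :
    importanceWeight A i * frob (importanceSample A B i) ^ 2 ≤ frob A ^ 2 * colNorm B i ^ 2 := by
  rcases eq_or_ne (importanceWeight A i) 0 with hw | hw
  · rw [hw, zero_mul]
    positivity
  · have hcol : colNorm A i ≠ 0 := fun h => hw (by simp [importanceWeight, h])
    have hF : frob A ≠ 0 := fun h => hw (by simp [importanceWeight, h])
    rw [importanceSample, frob_smul, frob_mul_single_mul_transpose, mul_pow, sq_abs,
      importanceWeight]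
    exact le_of_eq (by field_simp)

lemma sum_importanceWeight_mul_frob_importanceSample_sq_le (A : Matrix α γ ℝ)
    (B : Matrix β γ ℝ) :
    ∑ i, importanceWeight A i * frob (importanceSample A B i) ^ 2 ≤ frob A ^ 2 * frob B ^ 2 := by
  rw [frob_sq_eq_sum_colNorm_sq B, mul_sum]
  exact sum_le_sum fun i _ => importanceWeight_mul_frob_importanceSample_sq_le A B i

end ImportanceSampling

/-- Importance-sampled matrix multiplication. -/
theorem sampled_matrix_mult {d m n : ℕ}
    (A : Matrix (Fin d) (Fin m) ℝ) (B : Matrix (Fin n) (Fin m) ℝ)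
    (hA : A ≠ 0) (k : ℕ) (hk : 1 ≤ k) :
    ∃ idx : Fin k → Fin m,
      (∀ j, (fun i => A i (idx j)) ≠ 0) ∧
      frob (A * Bᵀ - A *
          ((frob A ^ 2 / k) •
            ∑ j, (1 / colNorm A (idx j) ^ 2) •
              Matrix.single (idx j) (idx j) (1 : ℝ)) * Bᵀ) ^ 2
        ≤ (1 / (k : ℝ)) * frob A ^ 2 * frob B ^ 2 := by
  obtain ⟨σ, hσ, hle⟩ := exists_norm_sum_smul_sub_average_sq_le (importanceWeight_nonneg A)
    (sum_importanceWeight hA) (fun i => (importanceSample A B i).toEuclideanSpace)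
    (Nat.one_le_iff_ne_zero.mp hk)
  refine ⟨σ, fun j hcol => hσ j ?_, ?_⟩
  · rw [importanceWeight_eq_zero_iff hA, colNorm_eq_norm, hcol, WithLp.toLp_zero, norm_zero]
  · simp only [← map_smul, ← map_sum, ← frob_eq_norm_toEuclideanSpace,
      sum_importanceWeight_smul_importanceSample hA] at hle
    rw [mul_smul_sum_smul_single_mul_transpose, frob_eq_norm_toEuclideanSpace, map_sub]
    calc _ ≤ _ := hle
      _ ≤ (k : ℝ)⁻¹ * (frob A ^ 2 * frob B ^ 2) := by
        gcongr
        exact sum_importanceWeight_mul_frob_importanceSample_sq_le A B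
      _ = _ := by ring
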